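/- arXiv:1711.09204 — 5 statements merged into one kernel-verified Lean document; each statement's English description precedes it below -/
import Mathlib

section
/- With β as above, the Ricci scalar ρ(x,y) := β(x,y)² - ∑_k y^k ∂β/∂x^k (x,y) equals (4 h(x) ∑ c_{ij} y^i y^j - 4 (∑ c_{ij} x^i y^j)² - 4 ⟨c', y⟩ ∑ c_{ij} x^i y^j - ⟨c', y⟩²) / (2 h(x))². -/
open Finset

/-- Partial derivative of `f` with respect to the `i`-th coordinate at `x`. -/
noncomputable def pd {n : ℕ} (i : Fin n) (f : (Fin n → ℝ) → ℝ) (x : Fin n → ℝ) : ℝ :=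
  deriv (fun t => f (Function.update x i t)) (x i)

/-- Partial derivative with respect to the `i`-th `x`-coordinate. -/
noncomputable def pdx {n : ℕ} (i : Fin n) (f : (Fin n → ℝ) → (Fin n → ℝ) → ℝ)
    (x y : Fin n → ℝ) : ℝ :=
  deriv (fun t => f (Function.update x i t) y) (x i)

/-- Partial derivative with respect to the `i`-th `y`-coordinate. -/
noncomputable def pdy {n : ℕ} (i : Fin n) (f : (Fin n → ℝ) → (Fin n → ℝ) → ℝ)
    (x y : Fin n → ℝ) : ℝ :=
  deriv (fun t => f x (Function.update y i t)) (y i)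

/-! Since `β(·, y)` is differentiable where `h ≠ 0`, the sum `S₀β(x, y) = ∑ yᵏ ∂ₖβ` is the
derivative of `s ↦ β(x + s y, y)` at `0`. Along that line the numerator `a = 2⟨Cx, y⟩ + ⟨c', y⟩`
of `β = -a / (2h)` grows by `2s⟨Cy, y⟩` and `h` becomes `h + s a + s² ⟨Cy, y⟩`, so `S₀β` is the
derivative at `0` of an explicit rational function of one variable, namely
`(2a² - 4h⟨Cy, y⟩) / (2h)²`, and `ρ = (4h⟨Cy, y⟩ - a²) / (2h)²`. -/

section Directional

variable {n : ℕ} {f : (Fin n → ℝ) → (Fin n → ℝ) → ℝ} {x y : Fin n → ℝ}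

theorem pdx_eq_fderiv (hf : DifferentiableAt ℝ (f · y) x) (k : Fin n) :
    pdx k f x y = fderiv ℝ (f · y) x (Pi.single k 1) :=
  (hf.hasFDerivAt.comp_hasDerivAt_of_eq (x k) (hasDerivAt_update x k (x k))
    (Function.update_eq_self k x).symm).deriv

theorem sum_mul_pdx_eq_deriv_line (hf : DifferentiableAt ℝ (f · y) x) :
    ∑ k, y k * pdx k f x y = deriv (fun s : ℝ => f (x + s • y) y) 0 := by
  have hline : HasDerivAt (fun s : ℝ => x + s • y) y 0 := by
    simpa using ((hasDerivAt_id (0 : ℝ)).smul_const y).const_add x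
  have hcomp : HasDerivAt (fun s : ℝ => f (x + s • y) y) (fderiv ℝ (f · y) x y) 0 :=
    hf.hasFDerivAt.comp_hasDerivAt_of_eq 0 hline (by simp)
  rw [hcomp.deriv]
  simp_rw [pdx_eq_fderiv hf, ← smul_eq_mul, ← map_smul, ← map_sum, ← pi_eq_sum_univ']

end Directional

section QuadraticForm

variable {n : ℕ} (C : Fin n → Fin n → ℝ)

theorem sum_sum_mul_add_smul_left (x y z : Fin n → ℝ) (s : ℝ) :
    ∑ i, ∑ j, C i j * (x + s • y) i * z j
      = ∑ i, ∑ j, C i j * x i * z j + s * ∑ i, ∑ j, C i j * y i * z j := by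
  simp only [Pi.add_apply, Pi.smul_apply, smul_eq_mul, mul_sum, ← sum_add_distrib]
  exact sum_congr rfl fun i _ => sum_congr rfl fun j _ => by ring

theorem sum_sum_mul_add_smul_right (x y z : Fin n → ℝ) (s : ℝ) :
    ∑ i, ∑ j, C i j * z i * (x + s • y) j
      = ∑ i, ∑ j, C i j * z i * x j + s * ∑ i, ∑ j, C i j * z i * y j := by
  simp only [Pi.add_apply, Pi.smul_apply, smul_eq_mul, mul_sum, ← sum_add_distrib]
  exact sum_congr rfl fun i _ => sum_congr rfl fun j _ => by ring

theorem sum_sum_mul_comm_of_symm (hsym : ∀ i j, C i j = C j i) (x y : Fin n → ℝ) :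
    ∑ i, ∑ j, C i j * y i * x j = ∑ i, ∑ j, C i j * x i * y j := by
  rw [sum_comm]
  exact sum_congr rfl fun i _ => sum_congr rfl fun j _ => by rw [hsym]; ring

theorem sum_sum_mul_line_of_symm (hsym : ∀ i j, C i j = C j i) (x y : Fin n → ℝ) (s : ℝ) :
    ∑ i, ∑ j, C i j * (x + s • y) i * (x + s • y) j
      = ∑ i, ∑ j, C i j * x i * x j + s * (2 * ∑ i, ∑ j, C i j * x i * y j)
        + s ^ 2 * ∑ i, ∑ j, C i j * y i * y j := by
  rw [sum_sum_mul_add_smul_left, sum_sum_mul_add_smul_right, sum_sum_mul_add_smul_right,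
    sum_sum_mul_comm_of_symm C hsym x y]
  ring

end QuadraticForm

theorem hasDerivAt_neg_div_along_line (a d q : ℝ) (hd : d ≠ 0) :
    HasDerivAt (fun s : ℝ => -(a + s * (2 * q)) / (2 * (d + s * a + s ^ 2 * q)))
      ((2 * a ^ 2 - 4 * d * q) / (2 * d) ^ 2) 0 := by
  have hnum : HasDerivAt (fun s : ℝ => -(a + s * (2 * q))) (-(2 * q)) 0 := by
    simpa using ((hasDerivAt_id (0 : ℝ)).mul_const (2 * q)).const_add a |>.fun_neg
  have hden : HasDerivAt (fun s : ℝ => 2 * (d + s * a + s ^ 2 * q)) (2 * a) 0 := by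
    simpa using (((hasDerivAt_id (0 : ℝ)).mul_const a).const_add d |>.add
      (((hasDerivAt_id (0 : ℝ)).pow 2).mul_const q)).const_mul 2
  refine (hnum.fun_div hden (by simpa using hd)).congr_deriv ?_
  ring

theorem stmt2_general (n : ℕ) (C : Fin n → Fin n → ℝ) (c' : Fin n → ℝ) (c : ℝ)
    (hsym : ∀ i j, C i j = C j i)
    (h : (Fin n → ℝ) → ℝ)
    (hh : ∀ x, h x = (∑ i, ∑ j, C i j * x i * x j) + (∑ k, c' k * x k) + c)
    (b : Fin n → (Fin n → ℝ) → ℝ)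
    (hb : ∀ k x, b k x = -(2 * (∑ i, C i k * x i) + c' k) / (2 * h x))
    (β : (Fin n → ℝ) → (Fin n → ℝ) → ℝ)
    (hβ : ∀ x y, β x y = ∑ k, b k x * y k) :
    ∀ x y : Fin n → ℝ, h x ≠ 0 →
      (β x y) ^ 2 - (∑ k, y k * pdx k β x y) =
        (4 * h x * (∑ i, ∑ j, C i j * y i * y j)
            - 4 * (∑ i, ∑ j, C i j * x i * y j) ^ 2
            - 4 * (∑ k, c' k * y k) * (∑ i, ∑ j, C i j * x i * y j)
            - (∑ k, c' k * y k) ^ 2)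
          / (2 * h x) ^ 2 := by
  intro x y hx
  have hβ_eq : ∀ x', β x' y
      = -(2 * ∑ i, ∑ j, C i j * x' i * y j + ∑ k, c' k * y k) / (2 * h x') := by
    intro x'
    simp only [hβ, hb, div_mul_eq_mul_div, ← sum_div, neg_mul, sum_neg_distrib, add_mul,
      sum_add_distrib, mul_assoc, ← mul_sum, sum_mul]
    rw [sum_comm (f := fun j i => C i j * (x' i * y j))]
  have hdiff : DifferentiableAt ℝ (β · y) x := by
    have hden : 2 * h x ≠ 0 := mul_ne_zero two_ne_zero hx
    simp only [hβ_eq, div_eq_mul_inv]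
    refine DifferentiableAt.mul (by fun_prop) (DifferentiableAt.inv ?_ hden)
    simp only [hh]
    fun_prop
  set a := 2 * ∑ i, ∑ j, C i j * x i * y j + ∑ k, c' k * y k
  set Q := ∑ i, ∑ j, C i j * y i * y j
  have hline : (fun s : ℝ => β (x + s • y) y)
      = fun s => -(a + s * (2 * Q)) / (2 * (h x + s * a + s ^ 2 * Q)) := by
    funext s
    have hlin : ∑ k, c' k * (x + s • y) k = ∑ k, c' k * x k + s * ∑ k, c' k * y k := by
      simp only [Pi.add_apply, Pi.smul_apply, smul_eq_mul, mul_add, sum_add_distrib, mul_sum,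
        mul_left_comm s]
    rw [hβ_eq, hh, hh, sum_sum_mul_add_smul_left, sum_sum_mul_line_of_symm C hsym, hlin]
    ring
  rw [sum_mul_pdx_eq_deriv_line hdiff, hline, (hasDerivAt_neg_div_along_line _ _ _ hx).deriv,
    hβ_eq]
  field_simp
  ring

/-- Formula for the Ricci scalar `ρ = β² - S₀β` of the one-form deformation. -/
theorem stmt2 (n : ℕ) (hn : 1 ≤ n) (C : Fin n → Fin n → ℝ) (c' : Fin n → ℝ) (c : ℝ)
    (hsym : ∀ i j, C i j = C j i)
    (h : (Fin n → ℝ) → ℝ)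
    (hh : ∀ x, h x = (∑ i, ∑ j, C i j * x i * x j) + (∑ k, c' k * x k) + c)
    (b : Fin n → (Fin n → ℝ) → ℝ)
    (hb : ∀ k x, b k x = -(2 * (∑ i, C i k * x i) + c' k) / (2 * h x))
    (β : (Fin n → ℝ) → (Fin n → ℝ) → ℝ)
    (hβ : ∀ x y, β x y = ∑ k, b k x * y k) :
    ∀ x y : Fin n → ℝ, h x ≠ 0 →
      (β x y) ^ 2 - (∑ k, y k * pdx k β x y) =
        (4 * h x * (∑ i, ∑ j, C i j * y i * y j)
            - 4 * (∑ i, ∑ j, C i j * x i * y j) ^ 2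
            - 4 * (∑ k, c' k * y k) * (∑ i, ∑ j, C i j * x i * y j)
            - (∑ k, c' k * y k) ^ 2)
          / (2 * h x) ^ 2 :=
  stmt2_general n C c' c hsym h hh b hb β hβ
end

section
/- Let ρ(x,y) = (4 h(x) Q(y) - 4 L(x,y)² - 4 ⟨c', y⟩ L(x,y) - ⟨c', y⟩²)/(2h(x))², where Q(y) = ∑ c_{ij} y^i y^j and L(x,y) = ∑ c_{ij} x^i y^j. Then the horizontal derivative vanishes: ∂ρ/∂x^k - β · ∂ρ/∂y^k - 2 ρ b_k = 0 for each k, where β(x,y) = ∑_j b_j(x) y^j and b_k(x) = -(2 ∑_i c_{ik} x^i + c_k)/(2h(x)). -/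
/-!
Completing the square in the numerator gives `ρ = Q(y)/h(x) - β(x,y)²`, and `b_k = -(∂_k h)/(2h)`.
Since `β` is linear in `y` with coefficients `b`, `∂β/∂y^k = b_k`, while differentiating
`β = -(2 L(x,y) + ⟨c', y⟩)/(2h)` in `x^k` gives `∂β/∂x^k = 2 β b_k - S_k(y)/h` with
`S_k(y) = ∑ c_{ik} y^i = ½ ∂Q/∂y^k`. Substituting these into the horizontal derivative, the
`S_k` terms and the `Q` terms cancel in pairs and the `β² b_k` terms add up to zero.
-/

open Finset

open Function

section Bilinear

variable {ι : Type*} [Fintype ι]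

def bilin (C : ι → ι → ℝ) (u v : ι → ℝ) : ℝ := ∑ i, ∑ j, C i j * u i * v j

variable {u v : ℝ → ι → ℝ} {u' v' : ι → ℝ} {t : ℝ}

theorem HasDerivAt.sum_mul_apply (a : ι → ℝ) (hu : HasDerivAt u u' t) :
    HasDerivAt (fun s => ∑ i, a i * u s i) (∑ i, a i * u' i) t :=
  HasDerivAt.fun_sum fun i _ => (hasDerivAt_pi.1 hu i).const_mul (a i)

theorem HasDerivAt.bilin (C : ι → ι → ℝ) (hu : HasDerivAt u u' t) (hv : HasDerivAt v v' t) :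
    HasDerivAt (fun s => bilin C (u s) (v s)) (bilin C u' (v t) + bilin C (u t) v') t := by
  refine (HasDerivAt.fun_sum fun i _ => HasDerivAt.fun_sum fun j _ =>
    ((hasDerivAt_pi.1 hu i).const_mul (C i j)).fun_mul (hasDerivAt_pi.1 hv j)).congr_deriv ?_
  simp only [_root_.bilin, ← sum_add_distrib]

variable (C : ι → ι → ℝ) (w : ι → ℝ)

@[simp] theorem bilin_zero_right : bilin C w 0 = 0 := by
  simp [bilin]

variable [DecidableEq ι] (k : ι)

@[simp] theorem bilin_single_left : bilin C (Pi.single k 1) w = ∑ j, C k j * w j := by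
  simp [bilin, Pi.single_apply, ite_mul]

@[simp] theorem bilin_single_right : bilin C w (Pi.single k 1) = ∑ i, C i k * w i := by
  simp [bilin, Pi.single_apply]

end Bilinear

section Ricci

variable {n : ℕ} {C : Fin n → Fin n → ℝ} {c' : Fin n → ℝ} {c : ℝ}
  {h : (Fin n → ℝ) → ℝ} {b : Fin n → (Fin n → ℝ) → ℝ} {β ρ : (Fin n → ℝ) → (Fin n → ℝ) → ℝ}

theorem hasDerivAt_quadratic_update (hsym : ∀ i j, C i j = C j i)
    (hh : ∀ x, h x = bilin C x x + ∑ m, c' m * x m + c) (x : Fin n → ℝ) (k : Fin n) :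
    HasDerivAt (fun t => h (update x k t)) (2 * ∑ i, C i k * x i + c' k) (x k) := by
  have hX := hasDerivAt_update x k (x k)
  simp_rw [hh]
  refine (((hX.bilin C hX).add (hX.sum_mul_apply c')).add_const c).congr_deriv ?_
  simp only [update_eq_self, bilin_single_left, bilin_single_right, hsym k, Pi.single_apply,
    mul_ite, mul_one, mul_zero, sum_ite_eq', mem_univ, if_true]
  ring

theorem beta_eq_div (hb : ∀ k x, b k x = -(2 * (∑ i, C i k * x i) + c' k) / (2 * h x))
    (hβ : ∀ x y, β x y = ∑ k, b k x * y k) (x y : Fin n → ℝ) :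
    β x y = -(2 * bilin C x y + ∑ m, c' m * y m) / (2 * h x) := by
  simp only [hβ, hb, div_mul_eq_mul_div, ← sum_div]
  congr 1
  simp only [bilin, neg_mul, sum_neg_distrib, add_mul, sum_add_distrib, mul_sum, sum_mul]
  rw [sum_comm]
  simp only [mul_assoc]

-- Also true where `h x = 0` (both sides are `0` since `a / 0 = 0`), so it is an identity of
-- functions that can be differentiated.
theorem rho_eq_div_sub_sq (hb : ∀ k x, b k x = -(2 * (∑ i, C i k * x i) + c' k) / (2 * h x))
    (hβ : ∀ x y, β x y = ∑ k, b k x * y k)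
    (hρ : ∀ x y, ρ x y = (4 * h x * bilin C y y - 4 * bilin C x y ^ 2
      - 4 * (∑ m, c' m * y m) * bilin C x y - (∑ m, c' m * y m) ^ 2) / (2 * h x) ^ 2) :
    ρ = fun x y => bilin C y y / h x - β x y ^ 2 := by
  ext x y
  rw [hρ, beta_eq_div hb hβ]
  rcases eq_or_ne (h x) 0 with hx | hx
  · simp [hx]
  · field_simp
    ring

theorem hasDerivAt_beta_update_left (hsym : ∀ i j, C i j = C j i)
    (hh : ∀ x, h x = bilin C x x + ∑ m, c' m * x m + c)
    (hb : ∀ k x, b k x = -(2 * (∑ i, C i k * x i) + c' k) / (2 * h x))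
    (hβ : ∀ x y, β x y = ∑ k, b k x * y k) {x : Fin n → ℝ} (hx : h x ≠ 0)
    (y : Fin n → ℝ) (k : Fin n) :
    HasDerivAt (fun t => β (update x k t) y)
      (2 * β x y * b k x - (∑ i, C i k * y i) / h x) (x k) := by
  have hX := hasDerivAt_update x k (x k)
  have hL := ((hX.bilin C (hasDerivAt_const (x k) y)).const_mul 2).add_const (∑ m, c' m * y m)
  have hH := (hasDerivAt_quadratic_update hsym hh x k).const_mul 2
  simp_rw [beta_eq_div hb hβ]
  refine (hL.neg.div hH (by simpa using hx)).congr_deriv ?_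
  simp only [Pi.neg_apply, update_eq_self, bilin_single_left, bilin_zero_right, add_zero, hb,
    hsym k]
  field_simp
  ring

theorem hasDerivAt_beta_update_right (hβ : ∀ x y, β x y = ∑ k, b k x * y k)
    (x y : Fin n → ℝ) (k : Fin n) :
    HasDerivAt (fun t => β x (update y k t)) (b k x) (y k) := by
  simp_rw [hβ]
  refine ((hasDerivAt_update y k (y k)).sum_mul_apply (b · x)).congr_deriv ?_
  simp [Pi.single_apply]

theorem pdx_rho_eq (hsym : ∀ i j, C i j = C j i)
    (hh : ∀ x, h x = bilin C x x + ∑ m, c' m * x m + c)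
    (hb : ∀ k x, b k x = -(2 * (∑ i, C i k * x i) + c' k) / (2 * h x))
    (hβ : ∀ x y, β x y = ∑ k, b k x * y k)
    (hρ : ∀ x y, ρ x y = (4 * h x * bilin C y y - 4 * bilin C x y ^ 2
      - 4 * (∑ m, c' m * y m) * bilin C x y - (∑ m, c' m * y m) ^ 2) / (2 * h x) ^ 2)
    {x : Fin n → ℝ} (hx : h x ≠ 0) (y : Fin n → ℝ) (k : Fin n) :
    pdx k ρ x y = 2 * bilin C y y * b k x / h x
      - 2 * β x y * (2 * β x y * b k x - (∑ i, C i k * y i) / h x) := by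
  have hH := hasDerivAt_quadratic_update hsym hh x k
  have hβx := hasDerivAt_beta_update_left hsym hh hb hβ hx y k
  rw [pdx, rho_eq_div_sub_sq hb hβ hρ]
  refine (((hH.inv (by simpa using hx)).const_mul (bilin C y y)).sub (hβx.pow 2)).deriv.trans ?_
  simp only [update_eq_self, hb]
  field_simp
  ring

theorem pdy_rho_eq (hsym : ∀ i j, C i j = C j i)
    (hb : ∀ k x, b k x = -(2 * (∑ i, C i k * x i) + c' k) / (2 * h x))
    (hβ : ∀ x y, β x y = ∑ k, b k x * y k)
    (hρ : ∀ x y, ρ x y = (4 * h x * bilin C y y - 4 * bilin C x y ^ 2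
      - 4 * (∑ m, c' m * y m) * bilin C x y - (∑ m, c' m * y m) ^ 2) / (2 * h x) ^ 2)
    (x y : Fin n → ℝ) (k : Fin n) :
    pdy k ρ x y = 2 * (∑ i, C i k * y i) / h x - 2 * β x y * b k x := by
  have hY := hasDerivAt_update y k (y k)
  have hQ := (hY.bilin C hY).div_const (h x)
  rw [pdy, rho_eq_div_sub_sq hb hβ hρ]
  refine (hQ.sub ((hasDerivAt_beta_update_right hβ x y k).pow 2)).deriv.trans ?_
  simp only [update_eq_self, bilin_single_left, bilin_single_right, hsym k]
  ring

end Ricci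

theorem stmt3_general (n : ℕ) (C : Fin n → Fin n → ℝ) (c' : Fin n → ℝ) (c : ℝ)
    (hsym : ∀ i j, C i j = C j i)
    (h : (Fin n → ℝ) → ℝ)
    (hh : ∀ x, h x = (∑ i, ∑ j, C i j * x i * x j) + (∑ k, c' k * x k) + c)
    (b : Fin n → (Fin n → ℝ) → ℝ)
    (hb : ∀ k x, b k x = -(2 * (∑ i, C i k * x i) + c' k) / (2 * h x))
    (β : (Fin n → ℝ) → (Fin n → ℝ) → ℝ)
    (hβ : ∀ x y, β x y = ∑ k, b k x * y k)
    (ρ : (Fin n → ℝ) → (Fin n → ℝ) → ℝ)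
    (hρ : ∀ x y, ρ x y =
      (4 * h x * (∑ i, ∑ j, C i j * y i * y j)
          - 4 * (∑ i, ∑ j, C i j * x i * y j) ^ 2
          - 4 * (∑ k, c' k * y k) * (∑ i, ∑ j, C i j * x i * y j)
          - (∑ k, c' k * y k) ^ 2)
        / (2 * h x) ^ 2) :
    ∀ x y : Fin n → ℝ, h x > 0 → ∀ k,
      pdx k ρ x y - β x y * pdy k ρ x y - 2 * ρ x y * b k x = 0 := by
  intro x y hx k
  rw [pdx_rho_eq hsym hh hb hβ hρ hx.ne' y k, pdy_rho_eq hsym hb hβ hρ x y k,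
    rho_eq_div_sub_sq hb hβ hρ]
  ring

/-- The horizontal derivative of the Ricci scalar vanishes:
`∂ρ/∂x^k - β ∂ρ/∂y^k - 2 ρ b_k = 0`. -/
theorem stmt3 (n : ℕ) (hn : 1 ≤ n) (C : Fin n → Fin n → ℝ) (c' : Fin n → ℝ) (c : ℝ)
    (hsym : ∀ i j, C i j = C j i)
    (h : (Fin n → ℝ) → ℝ)
    (hh : ∀ x, h x = (∑ i, ∑ j, C i j * x i * x j) + (∑ k, c' k * x k) + c)
    (b : Fin n → (Fin n → ℝ) → ℝ)
    (hb : ∀ k x, b k x = -(2 * (∑ i, C i k * x i) + c' k) / (2 * h x))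
    (β : (Fin n → ℝ) → (Fin n → ℝ) → ℝ)
    (hβ : ∀ x y, β x y = ∑ k, b k x * y k)
    (ρ : (Fin n → ℝ) → (Fin n → ℝ) → ℝ)
    (hρ : ∀ x y, ρ x y =
      (4 * h x * (∑ i, ∑ j, C i j * y i * y j)
          - 4 * (∑ i, ∑ j, C i j * x i * y j) ^ 2
          - 4 * (∑ k, c' k * y k) * (∑ i, ∑ j, C i j * x i * y j)
          - (∑ k, c' k * y k) ^ 2)
        / (2 * h x) ^ 2) :
    ∀ x y : Fin n → ℝ, h x > 0 → ∀ k,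
      pdx k ρ x y - β x y * pdy k ρ x y - 2 * ρ x y * b k x = 0 :=
  stmt3_general n C c' c hsym h hh b hb β hβ ρ hρ
end

section
/- Define F(x,y) = sqrt((4 h(x) Q(y) - 4 L(x,y)² - 4 ⟨c', y⟩ L(x,y) - ⟨c', y⟩²))/(2h(x)), with Q(y) = ∑ c_{ij} y^i y^j, L(x,y) = ∑ c_{ij} x^i y^j, h(x) = ∑ c_{ij} x^i x^j + ⟨c', x⟩ + c. On the open set where h(x) > 0 and the expression under the square root is positive, F satisfies Hamel's equations: ∑_j y^j ∂²F/∂y^k ∂x^j = ∂F/∂x^k for each k; hence F is projectively flat. -/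
open Finset

open Matrix Function Filter Topology

/-!
Write `B = ⟨∇h(x), y⟩`, so that `F = √S / (2h)` with `S = 4 h Q(y) - B²`. Differentiating in `x`
along `y` kills `S`: `y^j ∂S/∂x^j = 4 B Q - 4 B Q = 0`, hence `y^j ∂F/∂x^j = -F B / h`.
Since `y^j ∂²F/∂y^k∂x^j = ∂/∂y^k (y^j ∂F/∂x^j) - ∂F/∂x^k`, Hamel's equation reduces to
`∂/∂y^k (-F B / h) = 2 ∂F/∂x^k`, a polynomial identity in `√S` once `(√S)² = S`.
-/

theorem sum_sum_mul_mul_eq_dotProduct_mulVec {R ι : Type*} [CommSemiring R] [Fintype ι]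
    (A : Matrix ι ι R) (x y : ι → R) : ∑ i, ∑ j, A i j * x i * y j = x ⬝ᵥ A *ᵥ y := by
  simp only [dotProduct, mulVec, Finset.mul_sum]
  exact Finset.sum_congr rfl fun i _ => Finset.sum_congr rfl fun j _ => by ring

section Curves

variable {𝕜 ι : Type*} [NontriviallyNormedField 𝕜] [Fintype ι]
  {u w : 𝕜 → ι → 𝕜} {u' w' : ι → 𝕜} {t : 𝕜}

theorem HasDerivAt.dotProduct (hu : HasDerivAt u u' t) (hw : HasDerivAt w w' t) :
    HasDerivAt (fun s => u s ⬝ᵥ w s) (u' ⬝ᵥ w t + u t ⬝ᵥ w') t := by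
  simp only [_root_.dotProduct, ← Finset.sum_add_distrib]
  exact HasDerivAt.fun_sum fun i _ => (hasDerivAt_pi.1 hu i).mul (hasDerivAt_pi.1 hw i)

theorem HasDerivAt.mulVec (A : Matrix ι ι 𝕜) (hu : HasDerivAt u u' t) :
    HasDerivAt (fun s => A *ᵥ u s) (A *ᵥ u') t :=
  hasDerivAt_pi.2 fun i => by
    have h := (hasDerivAt_const t (A i)).dotProduct hu
    rwa [zero_dotProduct, zero_add] at h

theorem Matrix.IsSymm.hasDerivAt_dotProduct_mulVec {A : Matrix ι ι 𝕜} (hA : A.IsSymm)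
    (hu : HasDerivAt u u' t) :
    HasDerivAt (fun s => u s ⬝ᵥ A *ᵥ u s) (2 * (u' ⬝ᵥ A *ᵥ u t)) t := by
  refine (hu.dotProduct (hu.mulVec A)).congr_deriv ?_
  rw [dotProduct_mulVec (u t), ← mulVec_transpose, hA.eq, dotProduct_comm]
  ring

variable [DecidableEq ι]

theorem hasDerivAt_dotProduct_update (v y : ι → 𝕜) (k : ι) :
    HasDerivAt (fun t => v ⬝ᵥ update y k t) (v k) (y k) := by
  simpa using (hasDerivAt_const (y k) v).dotProduct (hasDerivAt_update y k (y k))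

theorem Matrix.IsSymm.hasDerivAt_dotProduct_mulVec_update {A : Matrix ι ι 𝕜} (hA : A.IsSymm)
    (y : ι → 𝕜) (k : ι) :
    HasDerivAt (fun t => update y k t ⬝ᵥ A *ᵥ update y k t) (2 * (A *ᵥ y) k) (y k) := by
  simpa using hA.hasDerivAt_dotProduct_mulVec (hasDerivAt_update y k (y k))

end Curves

variable {n : ℕ}

theorem pd_congr {f g : (Fin n → ℝ) → ℝ} {y : Fin n → ℝ} (k : Fin n) (hfg : f =ᶠ[𝓝 y] g) :
    pd k f y = pd k g y := by
  have hline : Tendsto (update y k) (𝓝 (y k)) (𝓝 y) := by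
    simpa using (continuous_const.update k continuous_id : Continuous (update y k)).tendsto (y k)
  exact (hfg.comp_tendsto hline).deriv_eq

theorem sum_mul_pd (g : Fin n → (Fin n → ℝ) → ℝ) (y : Fin n → ℝ) (k : Fin n)
    (hg : ∀ j, DifferentiableAt ℝ (fun t => g j (update y k t)) (y k)) :
    ∑ j, y j * pd k (g j) y = pd k (fun z => ∑ j, z j * g j z) y - g k y := by
  have hsum : HasDerivAt (fun t => ∑ j, update y k t j * g j (update y k t))
      (∑ j, ((Pi.single k 1 : Fin n → ℝ) j * g j y + y j * pd k (g j) y)) (y k) := by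
    refine HasDerivAt.fun_sum fun j _ => ?_
    simpa [pd] using (hasDerivAt_pi.1 (hasDerivAt_update y k (y k)) j).fun_mul (hg j).hasDerivAt
  rw [pd, hsum.deriv, Finset.sum_add_distrib]
  simp [Pi.single_apply]

namespace ProjectivelyFlatMetric

variable (C : Matrix (Fin n) (Fin n) ℝ) (c' : Fin n → ℝ) (c : ℝ)

def h (x : Fin n → ℝ) : ℝ := x ⬝ᵥ C *ᵥ x + c' ⬝ᵥ x + c

-- `∇h(x)` when `C` is symmetric
def gradH (x : Fin n → ℝ) : Fin n → ℝ := (2 : ℝ) • (C *ᵥ x) + c'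

def radicand (x y : Fin n → ℝ) : ℝ := 4 * h C c' c x * (y ⬝ᵥ C *ᵥ y) - (gradH C c' x ⬝ᵥ y) ^ 2

noncomputable def F (x y : Fin n → ℝ) : ℝ := √(radicand C c' c x y) / (2 * h C c' c x)

noncomputable def dxF (j : Fin n) (x y : Fin n → ℝ) : ℝ :=
  (gradH C c' x j * (y ⬝ᵥ C *ᵥ y) - gradH C c' x ⬝ᵥ y * (C *ᵥ y) j)
      / (h C c' c x * √(radicand C c' c x y))
    - √(radicand C c' c x y) * gradH C c' x j / (2 * h C c' c x ^ 2)

noncomputable def dyF (k : Fin n) (x y : Fin n → ℝ) : ℝ :=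
  (4 * h C c' c x * (C *ᵥ y) k - gradH C c' x ⬝ᵥ y * gradH C c' x k)
    / (2 * h C c' c x * √(radicand C c' c x y))

variable {C}

theorem gradH_dotProduct (hC : C.IsSymm) (x y : Fin n → ℝ) :
    gradH C c' x ⬝ᵥ y = 2 * (x ⬝ᵥ C *ᵥ y) + c' ⬝ᵥ y := by
  rw [gradH, add_dotProduct, smul_dotProduct, dotProduct_comm (C *ᵥ x), dotProduct_mulVec,
    ← mulVec_transpose, hC.eq, smul_eq_mul, dotProduct_comm _ x]

theorem radicand_eq (hC : C.IsSymm) (x y : Fin n → ℝ) :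
    radicand C c' c x y = 4 * h C c' c x * (y ⬝ᵥ C *ᵥ y) - 4 * (x ⬝ᵥ C *ᵥ y) ^ 2
      - 4 * (c' ⬝ᵥ y) * (x ⬝ᵥ C *ᵥ y) - (c' ⬝ᵥ y) ^ 2 := by
  rw [radicand, gradH_dotProduct c' hC]
  ring

theorem hasDerivAt_h_update (hC : C.IsSymm) (x : Fin n → ℝ) (j : Fin n) :
    HasDerivAt (fun t => h C c' c (update x j t)) (gradH C c' x j) (x j) :=
  (((hC.hasDerivAt_dotProduct_mulVec_update x j).add
    (hasDerivAt_dotProduct_update c' x j)).add_const c).congr_deriv (by simp [gradH])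

theorem hasDerivAt_gradH_update_dotProduct (hC : C.IsSymm) (x y : Fin n → ℝ) (j : Fin n) :
    HasDerivAt (fun t => gradH C c' (update x j t) ⬝ᵥ y) (2 * (C *ᵥ y) j) (x j) := by
  simp only [gradH_dotProduct c' hC, dotProduct_comm _ (C *ᵥ y)]
  exact ((hasDerivAt_dotProduct_update (C *ᵥ y) x j).const_mul 2).add_const _

theorem hasDerivAt_radicand_update_left (hC : C.IsSymm) (x y : Fin n → ℝ) (j : Fin n) :
    HasDerivAt (fun t => radicand C c' c (update x j t) y)
      (4 * gradH C c' x j * (y ⬝ᵥ C *ᵥ y) - 2 * (gradH C c' x ⬝ᵥ y) * (2 * (C *ᵥ y) j)) (x j) := by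
  have := (((hasDerivAt_h_update c' c hC x j).const_mul 4).mul_const (y ⬝ᵥ C *ᵥ y)).fun_sub
    ((hasDerivAt_gradH_update_dotProduct c' hC x y j).fun_pow 2)
  simpa [radicand, mul_assoc] using this

theorem hasDerivAt_radicand_update_right (hC : C.IsSymm) (x y : Fin n → ℝ) (k : Fin n) :
    HasDerivAt (fun t => radicand C c' c x (update y k t))
      (4 * h C c' c x * (2 * (C *ᵥ y) k) - 2 * (gradH C c' x ⬝ᵥ y) * gradH C c' x k) (y k) := by
  have := ((hC.hasDerivAt_dotProduct_mulVec_update y k).const_mul (4 * h C c' c x)).fun_sub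
    ((hasDerivAt_dotProduct_update (gradH C c' x) y k).fun_pow 2)
  simpa [radicand] using this

theorem hasDerivAt_F_update_left (hC : C.IsSymm) {x y : Fin n → ℝ} (hx : h C c' c x ≠ 0)
    (hR : 0 < radicand C c' c x y) (j : Fin n) :
    HasDerivAt (fun t => F C c' c (update x j t) y) (dxF C c' c j x y) (x j) := by
  have := ((hasDerivAt_radicand_update_left c' c hC x y j).sqrt (by simpa using hR.ne')).div
    ((hasDerivAt_h_update c' c hC x j).const_mul 2) (by simpa using hx)
  refine this.congr_deriv ?_
  have hr : √(radicand C c' c x y) ≠ 0 := (Real.sqrt_pos.2 hR).ne'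
  simp only [update_eq_self, dxF]
  field_simp
  ring

theorem hasDerivAt_F_update_right (hC : C.IsSymm) {x y : Fin n → ℝ} (hx : h C c' c x ≠ 0)
    (hR : 0 < radicand C c' c x y) (k : Fin n) :
    HasDerivAt (fun t => F C c' c x (update y k t)) (dyF C c' c k x y) (y k) := by
  have := ((hasDerivAt_radicand_update_right c' c hC x y k).sqrt (by simpa using hR.ne')).div_const
    (2 * h C c' c x)
  refine this.congr_deriv ?_
  have hr : √(radicand C c' c x y) ≠ 0 := (Real.sqrt_pos.2 hR).ne'
  simp only [update_eq_self, dyF]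
  field_simp

theorem differentiableAt_dxF_update_right (hC : C.IsSymm) {x y : Fin n → ℝ}
    (hx : h C c' c x ≠ 0) (hR : 0 < radicand C c' c x y) (j k : Fin n) :
    DifferentiableAt ℝ (fun t => dxF C c' c j x (update y k t)) (y k) := by
  have hQ := (hC.hasDerivAt_dotProduct_mulVec_update y k).differentiableAt
  have hB := (hasDerivAt_dotProduct_update (gradH C c' x) y k).differentiableAt
  have hCy : DifferentiableAt ℝ (fun t => (C *ᵥ update y k t) j) (y k) :=
    (hasDerivAt_dotProduct_update (C j) y k).differentiableAt
  have hS := (hasDerivAt_radicand_update_right c' c hC x y k).differentiableAt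
  have hr : √(radicand C c' c x y) ≠ 0 := (Real.sqrt_pos.2 hR).ne'
  unfold dxF
  fun_prop (disch := simp [hx, hr, hR.ne'])

theorem sum_mul_dxF (x y : Fin n → ℝ) :
    ∑ j, y j * dxF C c' c j x y = -(F C c' c x y * (gradH C c' x ⬝ᵥ y)) / h C c' c x := by
  set r := √(radicand C c' c x y)
  set α := (y ⬝ᵥ C *ᵥ y) / (h C c' c x * r) - r / (2 * h C c' c x ^ 2)
  set β := gradH C c' x ⬝ᵥ y / (h C c' c x * r)
  have hterm : ∀ j, y j * dxF C c' c j x y = y j * gradH C c' x j * α - y j * (C *ᵥ y) j * β :=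
    fun j => by simp only [dxF, α, β]; ring
  have hsum : ∑ j, y j * dxF C c' c j x y = (y ⬝ᵥ gradH C c' x) * α - (y ⬝ᵥ C *ᵥ y) * β := by
    simp only [hterm, Finset.sum_sub_distrib, ← Finset.sum_mul]
    rfl
  rw [hsum, dotProduct_comm, F]
  ring

theorem two_mul_dxF {x y : Fin n → ℝ} (hx : h C c' c x ≠ 0) (hR : 0 < radicand C c' c x y)
    (k : Fin n) :
    2 * dxF C c' c k x y
      = -(dyF C c' c k x y * (gradH C c' x ⬝ᵥ y) + F C c' c x y * gradH C c' x k) / h C c' c x := by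
  have hr : √(radicand C c' c x y) ^ 2 = radicand C c' c x y := Real.sq_sqrt hR.le
  have hr0 : √(radicand C c' c x y) ≠ 0 := (Real.sqrt_pos.2 hR).ne'
  simp only [dxF, dyF, F]
  field_simp
  rw [hr, radicand]
  ring

theorem hamel_equation (hC : C.IsSymm) {x y : Fin n → ℝ} (hx : h C c' c x ≠ 0)
    (hR : 0 < radicand C c' c x y) (k : Fin n) :
    ∑ j, y j * pdy k (fun x' y' => pdx j (F C c' c) x' y') x y = pdx k (F C c' c) x y := by
  have hnhds : ∀ᶠ z in 𝓝 y, 0 < radicand C c' c x z :=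
    (isOpen_lt continuous_const (by unfold radicand; fun_prop)).mem_nhds hR
  have hpdx : ∀ j, (fun z => pdx j (F C c' c) x z) =ᶠ[𝓝 y] dxF C c' c j x :=
    fun j => hnhds.mono fun z hz => (hasDerivAt_F_update_left c' c hC hx hz j).deriv
  have hE : HasDerivAt (fun t => -(F C c' c x (update y k t) * (gradH C c' x ⬝ᵥ update y k t))
      / h C c' c x) (-(dyF C c' c k x y * (gradH C c' x ⬝ᵥ y) + F C c' c x y * gradH C c' x k)
      / h C c' c x) (y k) := by
    simpa using (((hasDerivAt_F_update_right c' c hC hx hR k).fun_mul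
      (hasDerivAt_dotProduct_update (gradH C c' x) y k)).fun_neg).div_const (h C c' c x)
  calc ∑ j, y j * pdy k (fun x' y' => pdx j (F C c' c) x' y') x y
      = ∑ j, y j * pd k (dxF C c' c j x) y :=
        Finset.sum_congr rfl fun j _ => congrArg _ (pd_congr k (hpdx j))
    _ = pd k (fun z => -(F C c' c x z * (gradH C c' x ⬝ᵥ z)) / h C c' c x) y
          - dxF C c' c k x y := by
        rw [sum_mul_pd _ y k fun j => differentiableAt_dxF_update_right c' c hC hx hR j k]
        simp only [sum_mul_dxF]
    _ = dxF C c' c k x y := by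
        rw [pd, hE.deriv, ← two_mul_dxF c' c hx hR k]
        ring
    _ = pdx k (F C c' c) x y := (hasDerivAt_F_update_left c' c hC hx hR k).deriv.symm

end ProjectivelyFlatMetric

theorem stmt4_general (n : ℕ) (C : Fin n → Fin n → ℝ) (c' : Fin n → ℝ) (c : ℝ)
    (hsym : ∀ i j, C i j = C j i)
    (h : (Fin n → ℝ) → ℝ)
    (hh : ∀ x, h x = (∑ i, ∑ j, C i j * x i * x j) + (∑ k, c' k * x k) + c)
    (F : (Fin n → ℝ) → (Fin n → ℝ) → ℝ)
    (hF : ∀ x y, F x y =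
      Real.sqrt (4 * h x * (∑ i, ∑ j, C i j * y i * y j)
          - 4 * (∑ i, ∑ j, C i j * x i * y j) ^ 2
          - 4 * (∑ k, c' k * y k) * (∑ i, ∑ j, C i j * x i * y j)
          - (∑ k, c' k * y k) ^ 2) / (2 * h x)) :
    ∀ x y : Fin n → ℝ, h x > 0 →
      0 < 4 * h x * (∑ i, ∑ j, C i j * y i * y j)
          - 4 * (∑ i, ∑ j, C i j * x i * y j) ^ 2
          - 4 * (∑ k, c' k * y k) * (∑ i, ∑ j, C i j * x i * y j)
          - (∑ k, c' k * y k) ^ 2 →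
      ∀ k, (∑ j, y j * pdy k (fun x' y' => pdx j F x' y') x y) = pdx k F x y := by
  intro x y hx hR k
  have hC : Matrix.IsSymm (C : Matrix (Fin n) (Fin n) ℝ) := Matrix.IsSymm.ext fun i j => hsym j i
  obtain rfl : h = ProjectivelyFlatMetric.h C c' c := funext fun x => by
    rw [hh, sum_sum_mul_mul_eq_dotProduct_mulVec (C : Matrix (Fin n) (Fin n) ℝ)]
    rfl
  have hRad : ∀ x y, 4 * ProjectivelyFlatMetric.h C c' c x * (∑ i, ∑ j, C i j * y i * y j)
      - 4 * (∑ i, ∑ j, C i j * x i * y j) ^ 2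
      - 4 * (∑ k, c' k * y k) * (∑ i, ∑ j, C i j * x i * y j)
      - (∑ k, c' k * y k) ^ 2 = ProjectivelyFlatMetric.radicand C c' c x y := fun x y => by
    rw [ProjectivelyFlatMetric.radicand_eq c' c hC]
    simp only [sum_sum_mul_mul_eq_dotProduct_mulVec (C : Matrix (Fin n) (Fin n) ℝ)]
    rfl
  obtain rfl : F = ProjectivelyFlatMetric.F C c' c := funext₂ fun x y => by rw [hF, hRad]; rfl
  rw [hRad] at hR
  exact ProjectivelyFlatMetric.hamel_equation c' c hC hx.ne' hR k

/-- The new family of metrics satisfies Hamel's equations, hence is projectively flat. -/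
theorem stmt4 (n : ℕ) (hn : 1 ≤ n) (C : Fin n → Fin n → ℝ) (c' : Fin n → ℝ) (c : ℝ)
    (hsym : ∀ i j, C i j = C j i)
    (h : (Fin n → ℝ) → ℝ)
    (hh : ∀ x, h x = (∑ i, ∑ j, C i j * x i * x j) + (∑ k, c' k * x k) + c)
    (F : (Fin n → ℝ) → (Fin n → ℝ) → ℝ)
    (hF : ∀ x y, F x y =
      Real.sqrt (4 * h x * (∑ i, ∑ j, C i j * y i * y j)
          - 4 * (∑ i, ∑ j, C i j * x i * y j) ^ 2
          - 4 * (∑ k, c' k * y k) * (∑ i, ∑ j, C i j * x i * y j)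
          - (∑ k, c' k * y k) ^ 2) / (2 * h x)) :
    ∀ x y : Fin n → ℝ, h x > 0 →
      0 < 4 * h x * (∑ i, ∑ j, C i j * y i * y j)
          - 4 * (∑ i, ∑ j, C i j * x i * y j) ^ 2
          - 4 * (∑ k, c' k * y k) * (∑ i, ∑ j, C i j * x i * y j)
          - (∑ k, c' k * y k) ^ 2 →
      ∀ k, (∑ j, y j * pdy k (fun x' y' => pdx j F x' y') x y) = pdx k F x y :=
  stmt4_general n C c' c hsym h hh F hF
end

section
/- Let b_i(x) = -c_i/(2(⟨c',x⟩ + c)) with c' ∈ ℝⁿ \ {0}, c ∈ ℝ, and β(x,y) = ∑ b_i(x) y^i. Then the Ricci scalar of the deformed spray S = S₀ - 2βC satisfies Ric(x,y) = (n-1)(β² - S₀β)(x,y) = -(n-1) ⟨c',y⟩² / (4(⟨c',x⟩+c)²), which is nonzero whenever n ≥ 2 and ⟨c',y⟩ ≠ 0. -/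
open Finset

/-!
With `A(x) = ⟨c', x⟩ + c`, the form is `β(x, y) = -⟨c', y⟩ / (2 A(x))`. Since `A` is affine
with `∂A/∂x^k = c'_k`, we get `∂β/∂x^k = ⟨c', y⟩ c'_k / (2 A²)`, hence
`S₀β = ⟨c', y⟩² / (2 A²) = 2 β²` and `Ric = (n - 1)(β² - S₀β) = -(n - 1) β²`.
-/

open Matrix

theorem dotProduct_update {ι R : Type*} [Fintype ι] [DecidableEq ι] [CommRing R]
    (a x : ι → R) (k : ι) (t : R) :
    a ⬝ᵥ Function.update x k t = a ⬝ᵥ x + a k * (t - x k) := by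
  rw [Pi.update_eq_sub_add_single, dotProduct_add, dotProduct_sub, dotProduct_single,
    dotProduct_single]
  ring

theorem hasDerivAt_dotProduct_update_add {ι : Type*} [Fintype ι] [DecidableEq ι]
    (a x : ι → ℝ) (k : ι) (c : ℝ) :
    HasDerivAt (fun t => a ⬝ᵥ Function.update x k t + c) (a k) (x k) := by
  simp only [dotProduct_update]
  simpa using (((hasDerivAt_id (x k)).sub_const (x k)).const_mul (a k)).const_add (a ⬝ᵥ x)
    |>.add_const c

section LinearForm

variable {n : ℕ} (c' : Fin n → ℝ) (c : ℝ) {β : (Fin n → ℝ) → (Fin n → ℝ) → ℝ}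

theorem eq_neg_dotProduct_div_of_coeff {b : Fin n → (Fin n → ℝ) → ℝ}
    (hb : ∀ k x, b k x = -(c' k) / (2 * (c' ⬝ᵥ x + c)))
    (hβ : ∀ x y, β x y = ∑ k, b k x * y k) (x y : Fin n → ℝ) :
    β x y = -(c' ⬝ᵥ y) / (2 * (c' ⬝ᵥ x + c)) := by
  simp only [hβ, hb, dotProduct, neg_div, neg_mul, sum_neg_distrib, div_mul_eq_mul_div, sum_div]

variable {c' c} (hβ : ∀ x y, β x y = -(c' ⬝ᵥ y) / (2 * (c' ⬝ᵥ x + c)))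
  {x : Fin n → ℝ} (hA : c' ⬝ᵥ x + c ≠ 0) (y : Fin n → ℝ)
include hβ hA

theorem pdx_eq_of_eq_neg_dotProduct_div (k : Fin n) :
    pdx k β x y = (c' ⬝ᵥ y) * c' k / (2 * (c' ⬝ᵥ x + c) ^ 2) := by
  have hA' : 2 * (c' ⬝ᵥ Function.update x k (x k) + c) ≠ 0 := by simpa using hA
  have hderiv : HasDerivAt (fun t => β (Function.update x k t) y)
      ((c' ⬝ᵥ y) * c' k / (2 * (c' ⬝ᵥ x + c) ^ 2)) (x k) := by
    simp only [hβ]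
    refine ((hasDerivAt_const (x k) (-(c' ⬝ᵥ y))).div
      ((hasDerivAt_dotProduct_update_add c' x k c).const_mul 2) hA').congr_deriv ?_
    rw [Function.update_eq_self]
    field_simp
    ring
  exact hderiv.deriv

theorem sum_mul_pdx_eq_of_eq_neg_dotProduct_div :
    ∑ k, y k * pdx k β x y = (c' ⬝ᵥ y) ^ 2 / (2 * (c' ⬝ᵥ x + c) ^ 2) := by
  simp only [pdx_eq_of_eq_neg_dotProduct_div hβ hA]
  calc ∑ k, y k * ((c' ⬝ᵥ y) * c' k / (2 * (c' ⬝ᵥ x + c) ^ 2))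
      = (∑ k, c' k * y k) * ((c' ⬝ᵥ y) / (2 * (c' ⬝ᵥ x + c) ^ 2)) := by
        rw [sum_mul]
        exact sum_congr rfl fun k _ => by ring
    _ = (c' ⬝ᵥ y) ^ 2 / (2 * (c' ⬝ᵥ x + c) ^ 2) := by
        rw [← dotProduct]
        ring

end LinearForm

theorem stmt10_general (n : ℕ) (hn : 2 ≤ n) (c' : Fin n → ℝ) (c : ℝ)
    (b : Fin n → (Fin n → ℝ) → ℝ)
    (hb : ∀ k x, b k x = -(c' k) / (2 * ((∑ i, c' i * x i) + c)))
    (β : (Fin n → ℝ) → (Fin n → ℝ) → ℝ)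
    (hβ : ∀ x y, β x y = ∑ k, b k x * y k) :
    ∀ x y : Fin n → ℝ, 0 < (∑ i, c' i * x i) + c →
      ((n : ℝ) - 1) * ((β x y) ^ 2 - ∑ k, y k * pdx k β x y) =
        -((n : ℝ) - 1) * (∑ k, c' k * y k) ^ 2 / (4 * ((∑ i, c' i * x i) + c) ^ 2) ∧
      ((∑ k, c' k * y k) ≠ 0 →
        ((n : ℝ) - 1) * ((β x y) ^ 2 - ∑ k, y k * pdx k β x y) ≠ 0) := by
  intro x y hA
  have hβ' := eq_neg_dotProduct_div_of_coeff c' c hb hβ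
  have hRic : ((n : ℝ) - 1) * ((β x y) ^ 2 - ∑ k, y k * pdx k β x y) =
      -((n : ℝ) - 1) * (c' ⬝ᵥ y) ^ 2 / (4 * (c' ⬝ᵥ x + c) ^ 2) := by
    rw [hβ' x y, sum_mul_pdx_eq_of_eq_neg_dotProduct_div hβ' hA.ne']
    field_simp
    ring
  refine ⟨hRic, fun hP => hRic ▸ ?_⟩
  have hn1 : (n : ℝ) - 1 ≠ 0 := by
    have : (2 : ℝ) ≤ n := by exact_mod_cast hn
    linarith
  exact div_ne_zero (mul_ne_zero (neg_ne_zero.2 hn1) (pow_ne_zero 2 hP)) (by positivity)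

/-- The Ricci scalar of the deformation by `β` with `b_i = -c_i/(2(⟨c',x⟩+c))` is
`-(n-1)⟨c',y⟩²/(4(⟨c',x⟩+c)²)`, nonzero whenever `⟨c',y⟩ ≠ 0`. -/
theorem stmt10 (n : ℕ) (hn : 2 ≤ n) (c' : Fin n → ℝ) (hc' : c' ≠ 0) (c : ℝ)
    (b : Fin n → (Fin n → ℝ) → ℝ)
    (hb : ∀ k x, b k x = -(c' k) / (2 * ((∑ i, c' i * x i) + c)))
    (β : (Fin n → ℝ) → (Fin n → ℝ) → ℝ)
    (hβ : ∀ x y, β x y = ∑ k, b k x * y k) :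
    ∀ x y : Fin n → ℝ, 0 < (∑ i, c' i * x i) + c →
      ((n : ℝ) - 1) * ((β x y) ^ 2 - ∑ k, y k * pdx k β x y) =
        -((n : ℝ) - 1) * (∑ k, c' k * y k) ^ 2 / (4 * ((∑ i, c' i * x i) + c) ^ 2) ∧
      ((∑ k, c' k * y k) ≠ 0 →
        ((n : ℝ) - 1) * ((β x y) ^ 2 - ∑ k, y k * pdx k β x y) ≠ 0) :=
  stmt10_general n hn c' c b hb β hβ
end

section
/- For the spray with coefficients G¹ = (y¹)²/(2x²) + y¹(y¹+y²), G² = y²(y¹+y²) on {x² > 2} ⊂ ℝ², the horizontal vector fields h₁ = ∂/∂x¹ - (y¹/x² + 2y¹+y²)∂/∂y¹ - y²∂/∂y², h₂ = ∂/∂x² - y¹∂/∂y¹ - (y¹+2y²)∂/∂y², together with v₁ = [[h₁,h₂],h₁] and v₂ = [[h₁,h₂],h₂], span the full 4-dimensional tangent space at each point with (y¹,y²) ≠ (0,0); i.e. v₁ and v₂ (which are vertical) are linearly independent at such points. -/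
/-!
In the coordinates `p = (x¹, x², y¹, y²) = (p 0, p 1, p 2, p 3)` the bracket `[h₁, h₂]` and then
`v₁, v₂` are computed explicitly from the differentials of the fields. Both `v₁` and `v₂` are
vertical, so the four fields span iff the `2 × 2` determinant of their vertical parts is nonzero.
Multiplied by `(x²)⁶` this determinant is a binary quadratic form in `(y¹, y²)` whose
discriminant is `-(x²)⁵ g(x² - 2)` with `g` a polynomial with positive coefficients, so the form
is positive definite when `x² > 2`.
-/

/-- Lie bracket of vector fields on `ℝ⁴ = Fin 4 → ℝ`. -/
noncomputable def lie (V W : (Fin 4 → ℝ) → (Fin 4 → ℝ)) : (Fin 4 → ℝ) → (Fin 4 → ℝ) :=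
  fun p => fderiv ℝ W p (V p) - fderiv ℝ V p (W p)

open ContinuousLinearMap Filter Topology

local notation "ℝ⁴" => Fin 4 → ℝ

theorem lie_congr_of_eventuallyEq {V V' W : ℝ⁴ → ℝ⁴} {p : ℝ⁴} (h : V =ᶠ[𝓝 p] V') :
    lie V W p = lie V' W p := by
  simp only [lie, h.fderiv_eq, h.eq_of_nhds]

theorem fderiv_vecCons4_apply {E : Type*} [NormedAddCommGroup E] [NormedSpace ℝ E]
    {f₀ f₁ f₂ f₃ : E → ℝ} {D₀ D₁ D₂ D₃ : E →L[ℝ] ℝ} {p : E}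
    (h₀ : HasFDerivAt f₀ D₀ p) (h₁ : HasFDerivAt f₁ D₁ p) (h₂ : HasFDerivAt f₂ D₂ p)
    (h₃ : HasFDerivAt f₃ D₃ p) (v : E) :
    fderiv ℝ (fun q => ![f₀ q, f₁ q, f₂ q, f₃ q]) p v = ![D₀ v, D₁ v, D₂ v, D₃ v] := by
  have hD : HasFDerivAt (fun q => ![f₀ q, f₁ q, f₂ q, f₃ q]) (pi ![D₀, D₁, D₂, D₃]) p :=
    hasFDerivAt_pi.2 fun i => by fin_cases i <;> assumption
  rw [hD.fderiv]
  ext i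
  fin_cases i <;> rfl

theorem hasFDerivAt_inv_apply {ι : Type*} [Fintype ι] {p : ι → ℝ} {i : ι} (hp : p i ≠ 0) :
    HasFDerivAt (fun q : ι → ℝ => (q i)⁻¹) (-(p i ^ 2)⁻¹ • (proj i : (ι → ℝ) →L[ℝ] ℝ)) p :=
  (hasDerivAt_inv hp).comp_hasFDerivAt p (hasFDerivAt_apply i p)

theorem span_eq_top_of_det_ne_zero {K : Type*} [Field K] {a b c d e f g h : K}
    (hdet : e * h - f * g ≠ 0) :
    Submodule.span K
      ({![1, 0, a, b], ![0, 1, c, d], ![0, 0, e, f], ![0, 0, g, h]} : Set (Fin 4 → K)) = ⊤ := by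
  let M : Matrix (Fin 4) (Fin 4) K := !![1, 0, a, b; 0, 1, c, d; 0, 0, e, f; 0, 0, g, h]
  have hM : M.det = e * h - f * g := by
    simp [M, Matrix.det_succ_column_zero, Fin.sum_univ_succ]
    ring
  have hrows : ({![1, 0, a, b], ![0, 1, c, d], ![0, 0, e, f], ![0, 0, g, h]} : Set (Fin 4 → K))
      = Set.range M.row := by
    change _ = Set.range ![![1, 0, a, b], ![0, 1, c, d], ![0, 0, e, f], ![0, 0, g, h]]
    simp only [Matrix.range_cons, Matrix.range_empty, Set.union_empty, Set.singleton_union]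
  rw [hrows, ← range_vecMulLinear, LinearMap.range_eq_top]
  exact Matrix.vecMul_surjective_iff_isUnit.2 (M.isUnit_iff_isUnit_det.2 (hM ▸ hdet.isUnit))

theorem quadratic_form_pos {α β γ x y : ℝ} (hα : 0 < α) (hdisc : β ^ 2 < 4 * α * γ)
    (hxy : ¬(x = 0 ∧ y = 0)) : 0 < α * x ^ 2 + β * x * y + γ * y ^ 2 := by
  rcases eq_or_ne y 0 with rfl | hy
  · have hx : x ≠ 0 := fun hx => hxy ⟨hx, rfl⟩
    simpa using (by positivity : 0 < α * x ^ 2)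
  · have hsq : 4 * α * (α * x ^ 2 + β * x * y + γ * y ^ 2)
        = (2 * α * x + β * y) ^ 2 + (4 * α * γ - β ^ 2) * y ^ 2 := by ring
    have hdisc' := sub_pos.2 hdisc
    exact pos_of_mul_pos_right (hsq ▸ by positivity) (by positivity : (0 : ℝ) ≤ 4 * α)

noncomputable section Fields

def horizontal₁ (q : ℝ⁴) : ℝ⁴ := ![1, 0, -(q 2 / q 1 + 2 * q 2 + q 3), -q 3]

def horizontal₂ (q : ℝ⁴) : ℝ⁴ := ![0, 1, -q 2, -(q 2 + 2 * q 3)]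

def bracketH (q : ℝ⁴) : ℝ⁴ := ![0, 0, -(q 2 / q 1 ^ 2 + q 2 + q 3), q 2 / q 1 + q 2 + q 3]

def vertical₁ (q : ℝ⁴) : ℝ⁴ :=
  ![0, 0, q 3 / q 1 - q 3 / q 1 ^ 2 - q 2 / q 1 - q 2 - q 3,
    q 2 / q 1 ^ 2 + 2 * q 2 / q 1 + q 3 / q 1 + q 2 + q 3]

def vertical₂ (q : ℝ⁴) : ℝ⁴ :=
  ![0, 0, -(2 * q 2 / q 1 ^ 3 + q 2 + q 3), 2 * q 2 / q 1 ^ 2 - q 2 / q 1 + q 2 + q 3]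

end Fields

section Brackets

variable {p : ℝ⁴}

theorem fderiv_horizontal₁_apply (hp : p 1 ≠ 0) (v : ℝ⁴) :
    fderiv ℝ horizontal₁ p v =
      ![0, 0, p 2 / p 1 ^ 2 * v 1 - (1 / p 1 + 2) * v 2 - v 3, -v 3] := by
  have hform : horizontal₁ = fun q => ![1, 0, -(q 2 * (q 1)⁻¹ + 2 * q 2 + q 3), -q 3] := by
    ext q : 1
    simp only [horizontal₁, div_eq_mul_inv]
  rw [hform, fderiv_vecCons4_apply (hasFDerivAt_const _ _) (hasFDerivAt_const _ _)
    ((((hasFDerivAt_apply 2 p).fun_mul (hasFDerivAt_inv_apply hp)).fun_add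
      ((hasFDerivAt_apply 2 p).const_mul 2)).fun_add (hasFDerivAt_apply 3 p)).fun_neg
    (hasFDerivAt_apply 3 p).fun_neg]
  ext i
  fin_cases i <;> simp
  field_simp
  ring

theorem fderiv_horizontal₂_apply (v : ℝ⁴) :
    fderiv ℝ horizontal₂ p v = ![0, 0, -v 2, -(v 2 + 2 * v 3)] := by
  rw [show horizontal₂ = fun q => ![0, 1, -q 2, -(q 2 + 2 * q 3)] from rfl,
    fderiv_vecCons4_apply (hasFDerivAt_const _ _) (hasFDerivAt_const _ _)
      (hasFDerivAt_apply 2 p).fun_neg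
      ((hasFDerivAt_apply 2 p).fun_add ((hasFDerivAt_apply 3 p).const_mul 2)).fun_neg]
  ext i
  fin_cases i <;> simp

theorem fderiv_bracketH_apply (hp : p 1 ≠ 0) (v : ℝ⁴) :
    fderiv ℝ bracketH p v =
      ![0, 0, 2 * p 2 / p 1 ^ 3 * v 1 - (1 / p 1 ^ 2 + 1) * v 2 - v 3,
        -(p 2 / p 1 ^ 2) * v 1 + (1 / p 1 + 1) * v 2 + v 3] := by
  have hform : bracketH = fun q =>
      ![0, 0, -(q 2 * (q 1)⁻¹ * (q 1)⁻¹ + q 2 + q 3), q 2 * (q 1)⁻¹ + q 2 + q 3] := by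
    ext q : 1
    simp only [bracketH, div_eq_mul_inv, sq, mul_inv, mul_assoc]
  rw [hform, fderiv_vecCons4_apply (hasFDerivAt_const _ _) (hasFDerivAt_const _ _)
    (((((hasFDerivAt_apply 2 p).fun_mul (hasFDerivAt_inv_apply hp)).fun_mul
      (hasFDerivAt_inv_apply hp)).fun_add (hasFDerivAt_apply 2 p)).fun_add
      (hasFDerivAt_apply 3 p)).fun_neg
    ((((hasFDerivAt_apply 2 p).fun_mul (hasFDerivAt_inv_apply hp)).fun_add
      (hasFDerivAt_apply 2 p)).fun_add (hasFDerivAt_apply 3 p))]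
  ext i
  fin_cases i <;> simp <;> field_simp <;> ring

theorem lie_horizontal₁_horizontal₂ (hp : p 1 ≠ 0) :
    lie horizontal₁ horizontal₂ p = bracketH p := by
  rw [lie, fderiv_horizontal₂_apply, fderiv_horizontal₁_apply hp]
  ext i
  fin_cases i <;> simp [horizontal₁, horizontal₂, bracketH] <;> field_simp <;> ring

theorem lie_horizontal₁_horizontal₂_eventuallyEq (hp : p 1 ≠ 0) :
    lie horizontal₁ horizontal₂ =ᶠ[𝓝 p] bracketH :=
  ((continuous_apply 1).continuousAt.eventually_ne hp).mono
    fun _ hq => lie_horizontal₁_horizontal₂ hq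

theorem lie_bracketH_horizontal₁ (hp : p 1 ≠ 0) :
    lie (lie horizontal₁ horizontal₂) horizontal₁ p = vertical₁ p := by
  rw [lie_congr_of_eventuallyEq (lie_horizontal₁_horizontal₂_eventuallyEq hp), lie,
    fderiv_horizontal₁_apply hp, fderiv_bracketH_apply hp]
  ext i
  fin_cases i <;> simp [horizontal₁, bracketH, vertical₁] <;> field_simp <;> ring

theorem lie_bracketH_horizontal₂ (hp : p 1 ≠ 0) :
    lie (lie horizontal₁ horizontal₂) horizontal₂ p = vertical₂ p := by
  rw [lie_congr_of_eventuallyEq (lie_horizontal₁_horizontal₂_eventuallyEq hp), lie,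
    fderiv_horizontal₂_apply, fderiv_bracketH_apply hp]
  ext i
  fin_cases i <;> simp [horizontal₂, bracketH, vertical₂] <;> field_simp <;> ring

end Brackets

theorem discrim_neg_of_two_lt {s : ℝ} (hs : 2 < s) :
    (5 * s ^ 3 - 3 * s ^ 4 + 4 * s ^ 5) ^ 2
      < 4 * (2 * s + 4 * s ^ 2 + 2 * s ^ 5) * (2 * s ^ 5 - s ^ 4) := by
  obtain ⟨t, ht, rfl⟩ : ∃ t, 0 < t ∧ s = t + 2 := ⟨s - 2, by linarith, by ring⟩
  -- this is `4αγ - β²` written in `t = s - 2`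
  have hgap : 0 < (t + 2) ^ 5 * (16 * t ^ 4 + 79 * t ^ 3 + 152 * t ^ 2 + 147 * t + 54) := by
    positivity
  linarith

theorem vertical_det_pos {p : ℝ⁴} (hp : 2 < p 1) (hy : ¬(p 2 = 0 ∧ p 3 = 0)) :
    0 < vertical₁ p 2 * vertical₂ p 3 - vertical₁ p 3 * vertical₂ p 2 := by
  have hs : 0 < p 1 := by linarith
  have hform : p 1 ^ 6 * (vertical₁ p 2 * vertical₂ p 3 - vertical₁ p 3 * vertical₂ p 2)
      = (2 * p 1 + 4 * p 1 ^ 2 + 2 * p 1 ^ 5) * p 2 ^ 2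
        + (5 * p 1 ^ 3 - 3 * p 1 ^ 4 + 4 * p 1 ^ 5) * p 2 * p 3
        + (2 * p 1 ^ 5 - p 1 ^ 4) * p 3 ^ 2 := by
    simp only [vertical₁, vertical₂, Matrix.cons_val]
    field_simp
    ring
  have hQ := quadratic_form_pos (by positivity) (discrim_neg_of_two_lt hp) hy
  exact pos_of_mul_pos_right (hform ▸ hQ) (by positivity)

/-- For the non-flat deformed spray on `{x² > 2}`, the horizontal fields `h₁, h₂` and
the iterated brackets `v₁ = [[h₁,h₂],h₁]`, `v₂ = [[h₁,h₂],h₂]` span the whole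
4-dimensional tangent space at every point with `(y¹,y²) ≠ (0,0)`. -/
theorem stmt19 (h₁ h₂ : (Fin 4 → ℝ) → (Fin 4 → ℝ))
    (hh₁ : ∀ p, h₁ p = ![1, 0, -(p 2 / p 1 + 2 * p 2 + p 3), -(p 3)])
    (hh₂ : ∀ p, h₂ p = ![0, 1, -(p 2), -(p 2 + 2 * p 3)]) :
    ∀ p : Fin 4 → ℝ, p 1 > 2 → ¬(p 2 = 0 ∧ p 3 = 0) →
      Submodule.span ℝ
          {h₁ p, h₂ p, lie (lie h₁ h₂) h₁ p, lie (lie h₁ h₂) h₂ p} = ⊤ := by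
  intro p hp hy
  obtain rfl : h₁ = horizontal₁ := funext hh₁
  obtain rfl : h₂ = horizontal₂ := funext hh₂
  have hp0 : p 1 ≠ 0 := by positivity
  rw [lie_bracketH_horizontal₁ hp0, lie_bracketH_horizontal₂ hp0]
  exact span_eq_top_of_det_ne_zero (vertical_det_pos hp hy).ne'
end
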